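/- arXiv:1203.1435 — 3 statements merged into one kernel-verified Lean document; each statement's English description precedes it below -/
import Mathlib

section
/- Let f be a radially symmetric, absolutely continuous probability density on the n-dimensional Euclidean ball of radius R (possibly infinite) centered at the origin, with radial profile f_r satisfying lim_{r→R} r^n f_r(r) = 0. Let α ≥ 1 and β its Hölder conjugate. Then, provided the involved quantities are finite, I_{β,1}[f]^{1/β} · m_α[f]^{1/α} ≥ n. -/
open MeasureTheory Real Filter
open scoped ENNReal Topology NNReal

noncomputable section

/-- The information generating function `M_q[f] = ∫ f(x)^q dx`. -/
def igf (n : ℕ) (q : ℝ) (f : EuclideanSpace ℝ (Fin n) → ℝ) : ℝ :=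
  ∫ x : EuclideanSpace ℝ (Fin n), f x ^ q

/-- The elliptic moment of order `α`, `m_α[f] = ∫ ‖x‖^α f(x) dx`. -/
def ellMoment (n : ℕ) (α : ℝ) (f : EuclideanSpace ℝ (Fin n) → ℝ) : ℝ :=
  ∫ x : EuclideanSpace ℝ (Fin n), ‖x‖ ^ α * f x

/-- The generalized `(β,q)`-Fisher information
`I_{β,q}[f] = ∫ f(x)^{β(q-1)+1} (‖∇f(x)‖ / f(x))^β dx`. -/
def genFisher (n : ℕ) (β q : ℝ) (f : EuclideanSpace ℝ (Fin n) → ℝ) : ℝ :=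
  ∫ x : EuclideanSpace ℝ (Fin n), f x ^ (β * (q - 1) + 1) * (‖fderiv ℝ f x‖ / f x) ^ β

/-- The unnormalized generalized `q`-Gaussian:
`(1 - (q-1) γ ‖x‖^α)_+ ^ (1/(q-1))` for `q ≠ 1` and `exp (-γ ‖x‖^α)` for `q = 1`. -/
def qGaussKernel (n : ℕ) (α q γ : ℝ) (x : EuclideanSpace ℝ (Fin n)) : ℝ :=
  if q = 1 then Real.exp (-(γ * ‖x‖ ^ α))
  else (max (1 - (q - 1) * γ * ‖x‖ ^ α) 0) ^ ((1 : ℝ) / (q - 1))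

/-- Partition function `Z(γ)` of the generalized `q`-Gaussian. -/
def Zpart (n : ℕ) (α q γ : ℝ) : ℝ :=
  ∫ x : EuclideanSpace ℝ (Fin n), qGaussKernel n α q γ x

/-- The generalized `q`-Gaussian density `G_γ` on `ℝ^n`. -/
def qGaussian (n : ℕ) (α q γ : ℝ) (x : EuclideanSpace ℝ (Fin n)) : ℝ :=
  qGaussKernel n α q γ x / Zpart n α q γ

/-- The filter describing `r → R` from below, where `R ∈ (0,∞]` is the
radius of the ball (`R = ∞` corresponding to `r → ∞`). -/
def edgeFilter (R : ℝ≥0∞) : Filter ℝ := if R = ∞ then atTop else 𝓝[<] R.toReal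

section AuxFisherMoment
open Set Metric

private lemma eucl_nontrivial {n : ℕ} (hn : 0 < n) : Nontrivial (EuclideanSpace ℝ (Fin n)) := by
  have h : ‖EuclideanSpace.single (⟨0, hn⟩ : Fin n) (1:ℝ)‖ = 1 := by
    rw [EuclideanSpace.norm_single]; norm_num
  refine ⟨⟨EuclideanSpace.single (⟨0, hn⟩ : Fin n) (1:ℝ), 0, fun hcontra => ?_⟩⟩
  rw [hcontra, norm_zero] at h; norm_num at h

private lemma integral_fun_norm_eucl {n : ℕ} (hn : 0 < n) (g : ℝ → ℝ) :
    ∫ x : EuclideanSpace ℝ (Fin n), g ‖x‖ =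
      ((n : ℝ) * (volume (Metric.ball (0 : EuclideanSpace ℝ (Fin n)) 1)).toReal) *
        ∫ r in Set.Ioi (0:ℝ), r ^ (n - 1) * g r := by
  haveI := eucl_nontrivial hn
  rw [integral_fun_norm_addHaar (volume : Measure (EuclideanSpace ℝ (Fin n))) g]
  simp only [finrank_euclideanSpace_fin, nsmul_eq_mul, smul_eq_mul, measureReal_def]
  ring

private lemma integrableOn_of_integrable_fun_norm {n : ℕ} (hn : 0 < n) {g : ℝ → ℝ}
    (hg : Integrable (fun x : EuclideanSpace ℝ (Fin n) => g ‖x‖)) :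
    IntegrableOn (fun r : ℝ => r ^ (n - 1) * g r) (Set.Ioi (0:ℝ)) volume := by
  haveI := eucl_nontrivial hn
  have hs : MeasurableSet ({(0 : EuclideanSpace ℝ (Fin n))}ᶜ) := (measurableSet_singleton _).compl
  have h1 : Integrable ((fun x : EuclideanSpace ℝ (Fin n) => g ‖x‖) ∘
      (Subtype.val : ({(0 : EuclideanSpace ℝ (Fin n))}ᶜ : Set (EuclideanSpace ℝ (Fin n))) → _))
      ((volume : Measure (EuclideanSpace ℝ (Fin n))).comap Subtype.val) := by
    rw [← (MeasurableEmbedding.subtype_coe hs).integrable_map_iff, map_comap_subtype_coe hs]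
    exact hg.integrableOn
  have h2 : Integrable (fun p : Metric.sphere (0 : EuclideanSpace ℝ (Fin n)) 1 × Set.Ioi (0:ℝ) =>
        g p.2)
      ((volume : Measure (EuclideanSpace ℝ (Fin n))).toSphere.prod
        (Measure.volumeIoiPow (Module.finrank ℝ (EuclideanSpace ℝ (Fin n)) - 1))) := by
    rw [← (volume : Measure (EuclideanSpace ℝ (Fin n))).measurePreserving_homeomorphUnitSphereProd.integrable_comp_emb
      (Homeomorph.measurableEmbedding _)]
    refine h1.congr (Filter.Eventually.of_forall fun x => ?_)
    show g ‖x.1‖ = g (‖x.1‖ / 1)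
    rw [div_one]
  haveI : IsFiniteMeasure (volume : Measure (EuclideanSpace ℝ (Fin n))).toSphere := by
    constructor
    rw [Measure.toSphere_apply_univ]
    exact ENNReal.mul_lt_top (ENNReal.natCast_lt_top _) measure_ball_lt_top
  have h0ne : (volume : Measure (EuclideanSpace ℝ (Fin n))).toSphere ≠ 0 := by
    rw [← Measure.measure_univ_ne_zero, Measure.toSphere_apply_univ]
    exact mul_ne_zero (Nat.cast_ne_zero.2 Module.finrank_pos.ne')
      (measure_ball_pos _ _ one_pos).ne'
  haveI : (ae (volume : Measure (EuclideanSpace ℝ (Fin n))).toSphere).NeBot :=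
    ae_neBot.2 h0ne
  obtain ⟨a, h5⟩ := h2.prod_right_ae.exists
  rw [finrank_euclideanSpace_fin] at h5
  unfold Measure.volumeIoiPow at h5
  rw [integrable_withDensity_iff_integrable_smul'
    ((measurable_subtype_coe.pow_const _).ennreal_ofReal)
    (Eventually.of_forall fun _ => ENNReal.ofReal_lt_top)] at h5
  have h6 : Integrable ((fun r : ℝ => r ^ (n - 1) * g r) ∘
      (Subtype.val : (Set.Ioi (0:ℝ)) → ℝ)) (volume.comap Subtype.val) := by
    refine h5.congr (Filter.Eventually.of_forall fun r => ?_)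
    simp only [Function.comp_apply, smul_eq_mul,
      ENNReal.toReal_ofReal (pow_nonneg (le_of_lt r.2) _)]
  rwa [← (MeasurableEmbedding.subtype_coe measurableSet_Ioi).integrable_map_iff,
      map_comap_subtype_coe measurableSet_Ioi] at h6

private lemma radial_deriv {n : ℕ} (hn : 0 < n)
    {f : EuclideanSpace ℝ (Fin n) → ℝ} {fr : ℝ → ℝ}
    (hrad : ∀ x, f x = fr ‖x‖)
    {x : EuclideanSpace ℝ (Fin n)} (hx : x ≠ 0) (hd : DifferentiableAt ℝ f x) :
    HasDerivAt fr (deriv fr ‖x‖) ‖x‖ ∧ ‖fderiv ℝ f x‖ = |deriv fr ‖x‖| := by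
  haveI := eucl_nontrivial hn
  have hr : 0 < ‖x‖ := norm_pos_iff.2 hx
  set w : EuclideanSpace ℝ (Fin n) := ‖x‖⁻¹ • x with hw
  have hw1 : ‖w‖ = 1 := by
    rw [hw, norm_smul, norm_inv, norm_norm, inv_mul_cancel₀ hr.ne']
  have hxw : ‖x‖ • w = x := smul_inv_smul₀ hr.ne' x
  have h1 : HasDerivAt (fun s : ℝ => s • w) w ‖x‖ := by
    simpa using (hasDerivAt_id ‖x‖).smul_const w
  have h2 : HasDerivAt (fun s : ℝ => f (s • w)) (fderiv ℝ f x w) ‖x‖ := by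
    have hfd' : HasFDerivAt f (fderiv ℝ f x) (‖x‖ • w) := hxw.symm ▸ hd.hasFDerivAt
    exact hfd'.comp_hasDerivAt ‖x‖ h1
  have heq : (fun s : ℝ => f (s • w)) =ᶠ[𝓝 ‖x‖] fr := by
    filter_upwards [Ioi_mem_nhds hr] with s hs
    rw [hrad, norm_smul, Real.norm_eq_abs, abs_of_pos hs, hw1, mul_one]
  have hder0 : HasDerivAt fr (fderiv ℝ f x w) ‖x‖ := h2.congr_of_eventuallyEq heq.symm
  have hderval : deriv fr ‖x‖ = fderiv ℝ f x w := hder0.deriv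
  have hder : HasDerivAt fr (deriv fr ‖x‖) ‖x‖ := by rw [hderval]; exact hder0
  have hnd : DifferentiableAt ℝ (norm : EuclideanSpace ℝ (Fin n) → ℝ) x :=
    (contDiffAt_norm (𝕜 := ℝ) (n := 1) hx).differentiableAt one_ne_zero
  have hchain : HasFDerivAt (fun y : EuclideanSpace ℝ (Fin n) => fr ‖y‖)
      (deriv fr ‖x‖ • fderiv ℝ (norm : EuclideanSpace ℝ (Fin n) → ℝ) x) x :=
    hder.comp_hasFDerivAt x hnd.hasFDerivAt
  have hfd : fderiv ℝ f x = deriv fr ‖x‖ • fderiv ℝ (norm : EuclideanSpace ℝ (Fin n) → ℝ) x := by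
    have hfeq : f = fun y => fr ‖y‖ := funext hrad
    rw [hfeq]
    exact hchain.fderiv
  refine ⟨hder, ?_⟩
  rw [hfd, norm_smul, norm_fderiv_norm hnd, mul_one, Real.norm_eq_abs]

end AuxFisherMoment

open Set Metric

/-- **Theorem (case `q = 1` of the Fisher–moment–entropy inequality, `Cramér–Rao' form).**
Let `f` be a radially symmetric, absolutely continuous probability density (with radial
profile `fr`) on the `n`-dimensional Euclidean ball of radius `R ∈ (0,∞]` centered at
the origin, with `lim_{r→R} r^n fr(r) = 0`. Let `α ≥ 1` and `β` its Hölder conjugate.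
Then, provided the involved quantities are finite,
`I_{β,1}[f]^{1/β} · m_α[f]^{1/α} ≥ n`. -/
theorem fisher_moment_inequality_q_one
    (n : ℕ) (hn : 0 < n) (R : ℝ≥0∞) (hR : 0 < R)
    (α β : ℝ) (hα : 1 ≤ α) (hβ : 1 < β) (hconj : 1 / α + 1 / β = 1)
    (f : EuclideanSpace ℝ (Fin n) → ℝ) (fr : ℝ → ℝ)
    (hrad : ∀ x, f x = fr ‖x‖)
    (hsupp : ∀ x : EuclideanSpace ℝ (Fin n), ¬ ((‖x‖₊ : ℝ≥0∞) < R) → f x = 0)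
    (hnonneg : ∀ x, 0 ≤ f x)
    (hnorm : ∫ x : EuclideanSpace ℝ (Fin n), f x = 1)
    (hac : ∀ x : EuclideanSpace ℝ (Fin n), (‖x‖₊ : ℝ≥0∞) < R → DifferentiableAt ℝ f x)
    (hlim : Tendsto (fun r : ℝ => r ^ n * fr r) (edgeFilter R) (𝓝 0))
    (hIfin : Integrable (fun x : EuclideanSpace ℝ (Fin n) =>
      f x ^ (β * (1 - 1 : ℝ) + 1) * (‖fderiv ℝ f x‖ / f x) ^ β))
    (hmfin : Integrable (fun x : EuclideanSpace ℝ (Fin n) => ‖x‖ ^ α * f x)) :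
    (n : ℝ) ≤ genFisher n β 1 f ^ (1 / β) * ellMoment n α f ^ (1 / α) := by
  haveI := eucl_nontrivial hn
  have hβ0 : 0 < β := lt_trans one_pos hβ
  have hα0 : 0 < α := lt_of_lt_of_le one_pos hα
  have hα1 : 1 < α := by
    have h1 : 1/β < 1 := by rw [div_lt_one hβ0]; exact hβ
    have h2 : 0 < 1/β := by positivity
    have h3 : 1/α < 1 := by linarith
    rwa [div_lt_one hα0] at h3
  have hconjE : Real.HolderConjugate α β := ⟨by rw [inv_one, ← one_div, ← one_div]; exact hconj, hα0, hβ0⟩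
  have hint : Integrable f volume := by
    by_contra h
    rw [integral_undef h] at hnorm; norm_num at hnorm
  have hfm : AEStronglyMeasurable f volume := hint.aestronglyMeasurable
  -- unit vector
  set e : EuclideanSpace ℝ (Fin n) := EuclideanSpace.single (⟨0, hn⟩ : Fin n) (1:ℝ) with he_def
  have he : ‖e‖ = 1 := by rw [he_def, EuclideanSpace.norm_single]; norm_num
  have hre : ∀ r : ℝ, 0 ≤ r → ‖(r • e : EuclideanSpace ℝ (Fin n))‖ = r := fun r hr => by
    rw [norm_smul, he, mul_one, Real.norm_eq_abs, abs_of_nonneg hr]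
  have hfr_eq : ∀ r : ℝ, 0 ≤ r → fr r = f (r • e) := fun r hr => by
    rw [hrad, hre r hr]
  have hnormlt : ∀ x : EuclideanSpace ℝ (Fin n), R ≠ ∞ →
      (((‖x‖₊ : ℝ≥0∞) < R) ↔ ‖x‖ < R.toReal) := by
    intro x hRne
    rw [← enorm_eq_nnnorm, ← ofReal_norm, ENNReal.ofReal_lt_iff_lt_toReal (norm_nonneg x) hRne]
  -- vanishing outside the ball
  have hfr0 : ∀ r : ℝ, R ≠ ∞ → R.toReal ≤ r → fr r = 0 := by
    intro r hRne hr
    have hr0 : 0 ≤ r := le_trans ENNReal.toReal_nonneg hr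
    rw [hfr_eq r hr0]
    refine hsupp _ ?_
    rw [hnormlt _ hRne, hre r hr0]
    exact not_lt.2 hr
  have hf_out : ∀ x : EuclideanSpace ℝ (Fin n), R ≠ ∞ → R.toReal < ‖x‖ → fderiv ℝ f x = 0 := by
    intro x hRne hx
    have hev : f =ᶠ[𝓝 x] (fun _ => (0:ℝ)) := by
      have hopen : IsOpen {y : EuclideanSpace ℝ (Fin n) | R.toReal < ‖y‖} :=
        isOpen_lt continuous_const continuous_norm
      filter_upwards [hopen.mem_nhds hx] with y hy
      rw [hrad]; exact hfr0 _ hRne (le_of_lt hy)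
    rw [hev.fderiv_eq]; simp
  have hfr_out : ∀ r : ℝ, R ≠ ∞ → R.toReal < r → deriv fr r = 0 := by
    intro r hRne hr
    have hev : fr =ᶠ[𝓝 r] (fun _ => (0:ℝ)) := by
      filter_upwards [Ioi_mem_nhds hr] with s hs
      exact hfr0 s hRne (le_of_lt hs)
    rw [hev.deriv_eq]; simp
  -- a.e. facts
  have hbad : ∀ᵐ x : EuclideanSpace ℝ (Fin n) ∂volume, x ≠ 0 ∧ ‖x‖ ≠ R.toReal := by
    have h1 : volume (Metric.sphere (0 : EuclideanSpace ℝ (Fin n)) 0 ∪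
        Metric.sphere (0 : EuclideanSpace ℝ (Fin n)) R.toReal) = 0 :=
      measure_union_null (Measure.addHaar_sphere _ _ _) (Measure.addHaar_sphere _ _ _)
    filter_upwards [measure_eq_zero_iff_ae_notMem.1 h1] with x hx
    refine ⟨fun h0 => hx (Set.mem_union_left _ ?_), fun hR' => hx (Set.mem_union_right _ ?_)⟩
    · rw [mem_sphere_zero_iff_norm, h0, norm_zero]
    · rwa [mem_sphere_zero_iff_norm]
  have hkey : ∀ᵐ x : EuclideanSpace ℝ (Fin n) ∂volume,
      ‖fderiv ℝ f x‖ = |deriv fr ‖x‖| ∧ (f x = 0 → deriv fr ‖x‖ = 0) := by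
    filter_upwards [hbad] with x hx
    obtain ⟨hx0, hxR⟩ := hx
    by_cases hin : (‖x‖₊ : ℝ≥0∞) < R
    · obtain ⟨-, hnrm⟩ := radial_deriv hn hrad hx0 (hac x hin)
      refine ⟨hnrm, fun hfx => ?_⟩
      have hmin : IsLocalMin f x := Filter.Eventually.of_forall fun y => by
        rw [hfx]; exact hnonneg y
      have h0 := hmin.fderiv_eq_zero
      rw [h0, norm_zero] at hnrm
      exact abs_eq_zero.1 hnrm.symm
    · have hRne : R ≠ ∞ := by
        intro h; rw [h] at hin; exact hin ENNReal.coe_lt_top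
      have hge : R.toReal ≤ ‖x‖ := not_lt.1 (fun hlt => hin ((hnormlt x hRne).2 hlt))
      have hgt : R.toReal < ‖x‖ := lt_of_le_of_ne hge (Ne.symm hxR)
      rw [hf_out x hRne hgt, hfr_out ‖x‖ hRne hgt]
      simp
  -- the Hölder pair
  set u : EuclideanSpace ℝ (Fin n) → ℝ := fun x => ‖x‖ * f x ^ ((1:ℝ)/α) with hu_def
  set v : EuclideanSpace ℝ (Fin n) → ℝ :=
    fun x => f x ^ ((1:ℝ)/β) * (‖fderiv ℝ f x‖ / f x) with hv_def
  have hu_nonneg : ∀ x, 0 ≤ u x := fun x =>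
    mul_nonneg (norm_nonneg _) (Real.rpow_nonneg (hnonneg x) _)
  have hv_nonneg : ∀ x, 0 ≤ v x := fun x =>
    mul_nonneg (Real.rpow_nonneg (hnonneg x) _) (div_nonneg (norm_nonneg _) (hnonneg x))
  have huα : ∀ x, u x ^ α = ‖x‖ ^ α * f x := by
    intro x
    rw [hu_def]
    rw [Real.mul_rpow (norm_nonneg _) (Real.rpow_nonneg (hnonneg x) _),
      ← Real.rpow_mul (hnonneg x), one_div_mul_cancel hα0.ne', Real.rpow_one]
  have hvβ : ∀ x, v x ^ β = f x ^ (β * (1 - 1 : ℝ) + 1) * (‖fderiv ℝ f x‖ / f x) ^ β := by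
    intro x
    have hone : β * (1 - 1 : ℝ) + 1 = 1 := by ring
    rw [hone, Real.rpow_one, hv_def]
    rw [Real.mul_rpow (Real.rpow_nonneg (hnonneg x) _) (div_nonneg (norm_nonneg _) (hnonneg x)),
      ← Real.rpow_mul (hnonneg x), one_div_mul_cancel hβ0.ne', Real.rpow_one]
  have hMom : ∫ x : EuclideanSpace ℝ (Fin n), u x ^ α = ellMoment n α f := by
    unfold ellMoment
    exact integral_congr_ae (Filter.Eventually.of_forall huα)
  have hFish : ∫ x : EuclideanSpace ℝ (Fin n), v x ^ β = genFisher n β 1 f := by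
    unfold genFisher
    exact integral_congr_ae (Filter.Eventually.of_forall hvβ)
  -- measurability
  have hDm : AEMeasurable (fun x : EuclideanSpace ℝ (Fin n) => ‖fderiv ℝ f x‖) volume :=
    (measurable_fderiv ℝ f).norm.aemeasurable
  have hu_meas : AEStronglyMeasurable u volume :=
    (continuous_norm.aemeasurable.mul (hfm.aemeasurable.pow_const ((1:ℝ)/α))).aestronglyMeasurable
  have hv_meas : AEStronglyMeasurable v volume :=
    ((hfm.aemeasurable.pow_const ((1:ℝ)/β)).mul
      (hDm.div hfm.aemeasurable)).aestronglyMeasurable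
  have hq0α : (ENNReal.ofReal α) ≠ 0 := by
    simp only [ne_eq, ENNReal.ofReal_eq_zero, not_le]; exact hα0
  have hqtα : (ENNReal.ofReal α) ≠ ∞ := ENNReal.ofReal_ne_top
  have hq0β : (ENNReal.ofReal β) ≠ 0 := by
    simp only [ne_eq, ENNReal.ofReal_eq_zero, not_le]; exact hβ0
  have hqtβ : (ENNReal.ofReal β) ≠ ∞ := ENNReal.ofReal_ne_top
  have hmemu : MemLp u (ENNReal.ofReal α) volume := by
    have h1 : Integrable
        (fun x : EuclideanSpace ℝ (Fin n) => ‖u x‖ ^ (ENNReal.ofReal α).toReal) volume := by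
      refine hmfin.congr (Filter.Eventually.of_forall fun x => ?_)
      show ‖x‖ ^ α * f x = ‖u x‖ ^ (ENNReal.ofReal α).toReal
      rw [ENNReal.toReal_ofReal hα0.le, Real.norm_eq_abs, abs_of_nonneg (hu_nonneg x), huα x]
    have h3 : MemLp (fun x => ‖u x‖ ^ (ENNReal.ofReal α).toReal)
        (ENNReal.ofReal α / ENNReal.ofReal α) volume := by
      rw [ENNReal.div_self hq0α hqtα]
      exact memLp_one_iff_integrable.2 h1
    exact (memLp_norm_rpow_iff hu_meas hq0α hqtα).1 h3
  have hmemv : MemLp v (ENNReal.ofReal β) volume := by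
    have h1 : Integrable
        (fun x : EuclideanSpace ℝ (Fin n) => ‖v x‖ ^ (ENNReal.ofReal β).toReal) volume := by
      refine hIfin.congr (Filter.Eventually.of_forall fun x => ?_)
      show f x ^ (β * (1 - 1 : ℝ) + 1) * (‖fderiv ℝ f x‖ / f x) ^ β
        = ‖v x‖ ^ (ENNReal.ofReal β).toReal
      rw [ENNReal.toReal_ofReal hβ0.le, Real.norm_eq_abs, abs_of_nonneg (hv_nonneg x), hvβ x]
    have h3 : MemLp (fun x => ‖v x‖ ^ (ENNReal.ofReal β).toReal)
        (ENNReal.ofReal β / ENNReal.ofReal β) volume := by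
      rw [ENNReal.div_self hq0β hqtβ]
      exact memLp_one_iff_integrable.2 h1
    exact (memLp_norm_rpow_iff hv_meas hq0β hqtβ).1 h3
  have hHolder : ∫ x, u x * v x ≤
      (∫ x, u x ^ α) ^ (1/α) * (∫ x, v x ^ β) ^ (1/β) :=
    integral_mul_le_Lp_mul_Lq_of_nonneg hconjE (Filter.Eventually.of_forall hu_nonneg)
      (Filter.Eventually.of_forall hv_nonneg) hmemu hmemv
  -- integrability of the product
  have honeE : (1:ℝ≥0∞) / 1 = 1 / ENNReal.ofReal α + 1 / ENNReal.ofReal β := by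
    have hinv : α⁻¹ + β⁻¹ = 1 := by rw [← one_div, ← one_div]; exact hconj
    rw [one_div (ENNReal.ofReal α), one_div (ENNReal.ofReal β),
      ← ENNReal.ofReal_inv_of_pos hα0, ← ENNReal.ofReal_inv_of_pos hβ0,
      ← ENNReal.ofReal_add (inv_nonneg.2 hα0.le) (inv_nonneg.2 hβ0.le), hinv]
    simp
  have huv_int : Integrable (fun x => u x * v x) volume := by
    have h := memLp_one_iff_integrable.1 (hmemv.smul hmemu (hpqr := ⟨by simpa [one_div] using honeE.symm⟩))
    exact h
  -- a.e. identity with the radial function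
  have huv_ae : (fun x => u x * v x) =ᵐ[volume]
      (fun x : EuclideanSpace ℝ (Fin n) => ‖x‖ * |deriv fr ‖x‖|) := by
    filter_upwards [hkey] with x hx
    obtain ⟨hnrm, hzero⟩ := hx
    by_cases hfx : f x = 0
    · rw [hzero hfx]
      simp only [hu_def, hv_def, hfx, mul_zero]
      rw [Real.zero_rpow (by positivity : (1:ℝ)/α ≠ 0)]
      simp
    · have hfpos : 0 < f x := lt_of_le_of_ne (hnonneg x) (Ne.symm hfx)
      have h1 : f x ^ ((1:ℝ)/α) * f x ^ ((1:ℝ)/β) = f x := by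
        rw [← Real.rpow_add hfpos, hconj, Real.rpow_one]
      calc u x * v x
          = (f x ^ ((1:ℝ)/α) * f x ^ ((1:ℝ)/β)) * (‖x‖ * (‖fderiv ℝ f x‖ / f x)) := by
            simp only [hu_def, hv_def]; ring
        _ = ‖x‖ * (‖fderiv ℝ f x‖ / f x * f x) := by rw [h1]; ring
        _ = ‖x‖ * ‖fderiv ℝ f x‖ := by rw [div_mul_cancel₀ _ hfx]
        _ = ‖x‖ * |deriv fr ‖x‖| := by rw [hnrm]
  have hg4_int : Integrable (fun x : EuclideanSpace ℝ (Fin n) => ‖x‖ * |deriv fr ‖x‖|) volume :=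
    huv_int.congr huv_ae
  -- transfers to the half line
  have T1 : IntegrableOn (fun r : ℝ => r ^ (n-1) * fr r) (Set.Ioi (0:ℝ)) volume :=
    integrableOn_of_integrable_fun_norm hn
      (hint.congr (Filter.Eventually.of_forall fun x => hrad x))
  have T2 : IntegrableOn (fun r : ℝ => r ^ (n-1) * (r * |deriv fr r|)) (Set.Ioi (0:ℝ)) volume :=
    integrableOn_of_integrable_fun_norm hn (g := fun r => r * |deriv fr r|) hg4_int
  -- the constant of polar coordinates
  obtain ⟨c, hc_pos, hcval⟩ : ∃ c : ℝ, 0 < c ∧ ∀ g : ℝ → ℝ,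
      ∫ x : EuclideanSpace ℝ (Fin n), g ‖x‖ = c * ∫ r in Set.Ioi (0:ℝ), r ^ (n-1) * g r := by
    refine ⟨_, ?_, fun g => integral_fun_norm_eucl hn g⟩
    exact mul_pos (by exact_mod_cast hn)
      (ENNReal.toReal_pos (measure_ball_pos _ _ one_pos).ne' measure_ball_lt_top.ne)
  have hJ1 : c * (∫ r in Set.Ioi (0:ℝ), r ^ (n-1) * fr r) = 1 := by
    rw [← hcval fr]
    rw [show (fun x : EuclideanSpace ℝ (Fin n) => fr ‖x‖) = f from
      funext fun x => (hrad x).symm]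
    exact hnorm
  -- derivative of fr at radii inside the ball
  have hfrd : ∀ r : ℝ, 0 < r → (ENNReal.ofReal r) < R → HasDerivAt fr (deriv fr r) r := by
    intro r hr hrR
    have hner : ‖(r • e : EuclideanSpace ℝ (Fin n))‖ = r := hre r hr.le
    have hx0 : (r • e : EuclideanSpace ℝ (Fin n)) ≠ 0 := by
      intro h; rw [h, norm_zero] at hner; exact hr.ne hner
    have hlt : ((‖(r • e : EuclideanSpace ℝ (Fin n))‖₊ : ℝ≥0∞) < R) := by
      rw [← enorm_eq_nnnorm, ← ofReal_norm, hner]; exact hrR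
    obtain ⟨hd, -⟩ := radial_deriv hn hrad hx0 (hac _ hlt)
    rwa [hner] at hd
  -- continuity of r ↦ r^n fr r at 0 from the right
  have hcont0 : ContinuousWithinAt (fun s : ℝ => s ^ n * fr s) (Set.Ici 0) 0 := by
    have h0e : ((0:ℝ) • e : EuclideanSpace ℝ (Fin n)) = 0 := zero_smul _ _
    have hfc0 : ContinuousAt (fun s : ℝ => f (s • e)) 0 := by
      have h1 : ContinuousAt (fun s : ℝ => (s • e : EuclideanSpace ℝ (Fin n))) 0 :=
        (continuous_id.smul continuous_const).continuousAt
      have h2 : ContinuousAt f ((0:ℝ) • e) := by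
        rw [h0e]; exact (hac 0 (by simpa using hR)).continuousAt
      exact ContinuousAt.comp (f := fun s : ℝ => s • e) h2 h1
    apply ContinuousWithinAt.congr (f := fun s : ℝ => s ^ n * f (s • e))
      (((continuous_pow n).continuousAt.mul hfc0).continuousWithinAt)
    · intro s hs; rw [hfr_eq s hs]
    · rw [hfr_eq 0 le_rfl]
  have hF0 : (fun s : ℝ => s ^ n * fr s) 0 = 0 := by
    simp [zero_pow hn.ne']
  -- integrability of the two parts of the derivative
  have hAint : IntegrableOn (fun r : ℝ => (n:ℝ) * r ^ (n-1) * fr r) (Set.Ioi (0:ℝ)) volume := by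
    refine (T1.const_mul (n:ℝ)).congr (Filter.Eventually.of_forall fun r => ?_)
    ring
  have hder_int : IntegrableOn (fun r : ℝ => r ^ n * deriv fr r) (Set.Ioi (0:ℝ)) volume := by
    refine T2.mono' (((measurable_id.pow_const n).mul (measurable_deriv fr)).aestronglyMeasurable) ?_
    filter_upwards [ae_restrict_mem measurableSet_Ioi] with r hr
    have hr0 : (0:ℝ) < r := hr
    have hpow : r ^ n = r ^ (n-1) * r := by
      conv_lhs => rw [← Nat.sub_add_cancel hn]
      rw [pow_succ]
    have habs : |r ^ n * deriv fr r| = r ^ (n-1) * (r * |deriv fr r|) := by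
      rw [abs_mul, abs_of_nonneg (pow_nonneg hr0.le n), hpow]; ring
    rw [Real.norm_eq_abs, habs]
  have hsum_int : IntegrableOn
      (fun r : ℝ => (n:ℝ) * r ^ (n-1) * fr r + r ^ n * deriv fr r) (Set.Ioi (0:ℝ)) volume := by
    have h := hAint.add hder_int
    exact h.congr (Filter.Eventually.of_forall fun r => rfl)
  -- integration by parts
  have hibp : ∃ S : Set ℝ, MeasurableSet S ∧ S ⊆ Set.Ioi 0 ∧
      (∫ r in S, r ^ (n-1) * fr r) = (∫ r in Set.Ioi (0:ℝ), r ^ (n-1) * fr r) ∧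
      (∫ r in S, ((n:ℝ) * r ^ (n-1) * fr r + r ^ n * deriv fr r)) = 0 := by
    by_cases hRtop : R = ∞
    · refine ⟨Set.Ioi 0, measurableSet_Ioi, subset_rfl, rfl, ?_⟩
      have hlim' : Tendsto (fun s : ℝ => s ^ n * fr s) atTop (𝓝 0) := by
        have : edgeFilter R = atTop := by unfold edgeFilter; rw [if_pos hRtop]
        rwa [this] at hlim
      have hderiv : ∀ r ∈ Set.Ioi (0:ℝ), HasDerivAt (fun s => s ^ n * fr s)
          ((n:ℝ) * r ^ (n-1) * fr r + r ^ n * deriv fr r) r := fun r hr =>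
        (hasDerivAt_pow n r).mul (hfrd r hr (by rw [hRtop]; exact ENNReal.ofReal_lt_top))
      have h0 := integral_Ioi_of_hasDerivAt_of_tendsto hcont0 hderiv hsum_int hlim'
      rw [h0]; simp [zero_pow hn.ne']
    · have hRt_pos : 0 < R.toReal := ENNReal.toReal_pos hR.ne' hRtop
      refine ⟨Set.Ioo 0 R.toReal, measurableSet_Ioo, Set.Ioo_subset_Ioi_self, ?_, ?_⟩
      · have hIci0 : Set.EqOn (fun r : ℝ => r ^ (n-1) * fr r) (fun _ => (0:ℝ))
            (Set.Ici R.toReal) := fun r hr => by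
          simp only; rw [hfr0 r hRtop hr, mul_zero]
        have hsub2 : Set.Ici R.toReal ⊆ Set.Ioi (0:ℝ) := fun r hr =>
          lt_of_lt_of_le hRt_pos hr
        have hdisj : Disjoint (Set.Ioo (0:ℝ) R.toReal) (Set.Ici R.toReal) :=
          Set.disjoint_left.2 fun r hr hr' => absurd hr.2 (not_lt.2 hr')
        have hsplit : ∫ r in Set.Ioi (0:ℝ), r ^ (n-1) * fr r =
            (∫ r in Set.Ioo (0:ℝ) R.toReal, r ^ (n-1) * fr r) +
              ∫ r in Set.Ici R.toReal, r ^ (n-1) * fr r := by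
          rw [← setIntegral_union hdisj measurableSet_Ici
            (T1.mono_set Set.Ioo_subset_Ioi_self) (T1.mono_set hsub2),
            Set.Ioo_union_Ici_eq_Ioi hRt_pos]
        rw [hsplit, setIntegral_congr_fun measurableSet_Ici hIci0]
        simp
      · have hb : Tendsto (fun s : ℝ => s ^ n * fr s) (𝓝[<] R.toReal) (𝓝 0) := by
          have : edgeFilter R = 𝓝[<] R.toReal := by unfold edgeFilter; rw [if_neg hRtop]
          rwa [this] at hlim
        have ha : Tendsto (fun s : ℝ => s ^ n * fr s) (𝓝[>] (0:ℝ)) (𝓝 0) := by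
          have h1 := hcont0.tendsto
          simp only [zero_pow hn.ne', zero_mul] at h1
          exact h1.mono_left (nhdsWithin_mono _ Set.Ioi_subset_Ici_self)
        have hderiv : ∀ r ∈ Set.Ioo (0:ℝ) R.toReal, HasDerivAt (fun s => s ^ n * fr s)
            ((n:ℝ) * r ^ (n-1) * fr r + r ^ n * deriv fr r) r := fun r hr =>
          (hasDerivAt_pow n r).mul (hfrd r hr.1
            ((ENNReal.ofReal_lt_iff_lt_toReal hr.1.le hRtop).2 hr.2))
        have hii : IntervalIntegrable
            (fun r => (n:ℝ) * r ^ (n-1) * fr r + r ^ n * deriv fr r) volume 0 R.toReal := by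
          rw [intervalIntegrable_iff_integrableOn_Ioc_of_le hRt_pos.le]
          exact hsum_int.mono_set Set.Ioc_subset_Ioi_self
        have h0 := intervalIntegral.integral_eq_sub_of_hasDerivAt_of_tendsto hRt_pos
          hderiv hii ha hb
        rw [intervalIntegral.integral_of_le hRt_pos.le, integral_Ioc_eq_integral_Ioo] at h0
        simpa using h0
  obtain ⟨S, hSmeas, hSsub, hSval, hSibp⟩ := hibp
  have hA_S : IntegrableOn (fun r : ℝ => (n:ℝ) * r ^ (n-1) * fr r) S volume :=
    hAint.mono_set hSsub
  have hB_S : IntegrableOn (fun r : ℝ => r ^ n * deriv fr r) S volume :=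
    hder_int.mono_set hSsub
  have hsplit2 : (∫ r in S, (n:ℝ) * r ^ (n-1) * fr r) + (∫ r in S, r ^ n * deriv fr r) = 0 := by
    rw [← integral_add hA_S hB_S]; exact hSibp
  have hIA : (∫ r in S, (n:ℝ) * r ^ (n-1) * fr r) =
      (n:ℝ) * ∫ r in Set.Ioi (0:ℝ), r ^ (n-1) * fr r := by
    rw [← hSval, ← integral_const_mul]
    exact setIntegral_congr_fun hSmeas fun r _ => by ring
  have hneg : -(∫ r in S, r ^ n * deriv fr r) =
      (n:ℝ) * ∫ r in Set.Ioi (0:ℝ), r ^ (n-1) * fr r := by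
    rw [← hIA]; linarith [hsplit2]
  have habs2 : -(∫ r in S, r ^ n * deriv fr r) ≤
      ∫ r in S, r ^ (n-1) * (r * |deriv fr r|) := by
    have h1 : -(∫ r in S, r ^ n * deriv fr r) ≤ ∫ r in S, |r ^ n * deriv fr r| := by
      have h2 := norm_integral_le_integral_norm (μ := volume.restrict S)
        (f := fun r => r ^ n * deriv fr r)
      rw [Real.norm_eq_abs] at h2
      refine (neg_le_abs _).trans (h2.trans (le_of_eq
        (integral_congr_ae (Filter.Eventually.of_forall fun r => ?_))))
      show ‖r ^ n * deriv fr r‖ = |r ^ n * deriv fr r|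
      exact Real.norm_eq_abs _
    refine h1.trans (le_of_eq (setIntegral_congr_fun hSmeas fun r hr => ?_))
    have hr0 : (0:ℝ) < r := hSsub hr
    have hpow : r ^ n = r ^ (n-1) * r := by
      conv_lhs => rw [← Nat.sub_add_cancel hn]
      rw [pow_succ]
    rw [abs_mul, abs_of_nonneg (pow_nonneg hr0.le n), hpow]; ring
  have hmono : (∫ r in S, r ^ (n-1) * (r * |deriv fr r|)) ≤
      ∫ r in Set.Ioi (0:ℝ), r ^ (n-1) * (r * |deriv fr r|) := by
    refine setIntegral_mono_set T2 ?_ (HasSubset.Subset.eventuallyLE hSsub)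
    filter_upwards [ae_restrict_mem measurableSet_Ioi] with r hr
    have hr0 : (0:ℝ) < r := hr
    exact mul_nonneg (pow_nonneg hr0.le _) (mul_nonneg hr0.le (abs_nonneg _))
  have heart : (n:ℝ) ≤ ∫ x, u x * v x := by
    have h1 : ∫ x, u x * v x =
        c * ∫ r in Set.Ioi (0:ℝ), r ^ (n-1) * (r * |deriv fr r|) := by
      rw [integral_congr_ae huv_ae]
      exact hcval (fun r => r * |deriv fr r|)
    rw [h1]
    calc (n:ℝ) = (n:ℝ) * (c * ∫ r in Set.Ioi (0:ℝ), r ^ (n-1) * fr r) := by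
          rw [hJ1, mul_one]
      _ = c * ((n:ℝ) * ∫ r in Set.Ioi (0:ℝ), r ^ (n-1) * fr r) := by ring
      _ = c * (-(∫ r in S, r ^ n * deriv fr r)) := by rw [hneg]
      _ ≤ c * ∫ r in Set.Ioi (0:ℝ), r ^ (n-1) * (r * |deriv fr r|) := by
          exact mul_le_mul_of_nonneg_left (habs2.trans hmono) hc_pos.le
  have hfinal : ∫ x, u x * v x ≤
      ellMoment n α f ^ (1/α) * genFisher n β 1 f ^ (1/β) := by
    rw [← hMom, ← hFish]; exact hHolder
  rw [mul_comm]
  exact le_trans heart hfinal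
end
end

section
/- (Maximum entropy characterization of generalized q-Gaussians.) Let α ∈ (0,∞) and q > n/(n+α). Among all probability densities f on ℝ^n with a given elliptic moment m_α[f] = m < ∞ and finite Rényi entropy power, one has N_q[f] ≤ N_q[G_γ], where γ > 0 is chosen so that m_α[G_γ] = m. -/
open MeasureTheory Real Filter
open scoped ENNReal Topology NNReal

noncomputable section

/-- The Rényi entropy power of order `q`:
`N_q[f] = M_q[f]^{1/(1-q)}` for `q ≠ 1`, and `N_1[f] = exp(-∫ f log f)`. -/
def entPower (n : ℕ) (q : ℝ) (f : EuclideanSpace ℝ (Fin n) → ℝ) : ℝ :=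
  if q = 1 then Real.exp (-∫ x : EuclideanSpace ℝ (Fin n), f x * Real.log (f x))
  else igf n q f ^ ((1 : ℝ) / (1 - q))

/-!
With `Φ a = a log a` for `q = 1` and `Φ a = (q - 1) a ^ q` otherwise (both convex on `[0, ∞)`),
the claim is `∫ Φ ∘ G ≤ ∫ Φ ∘ f`. The `q`-Gaussian is built so that the slope `Φ' (G x)` is an
affine function `a + b ‖x‖ ^ α`: `log G = -log Z - γ ‖x‖ ^ α`, resp.
`G ^ (q - 1) = Z ^ (1 - q) (1 - (q - 1) γ ‖x‖ ^ α)₊`. Where `G` vanishes (only for `q > 1`) the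
affine expression is `≤ 0`, which is still a supporting slope at `0`. Integrating the supporting
line inequality `Φ (G x) + (a + b ‖x‖ ^ α) (f x - G x) ≤ Φ (f x)` and using that `f` and `G` have
the same mass and the same `α`-moment gives the claim.

`G` and `‖x‖ ^ α G` are integrable because `G` decays like `‖x‖ ^ (-α / (1 - q))` for `q < 1`
(this is where `q > n / (n + α)` enters), faster than any power for `q = 1`, and has compact
support for `q > 1`.
-/

open Asymptotics Module

theorem isBigO_rpow_neg_one_add {r : ℝ} (hr : 0 ≤ r) :
    (fun t : ℝ => t ^ (-r)) =O[atTop] fun t => (1 + t) ^ (-r) := by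
  refine IsBigO.of_bound (2 ^ r) ((eventually_ge_atTop 1).mono fun t ht => ?_)
  have ht0 : 0 < t := by linarith
  rw [norm_of_nonneg (rpow_nonneg ht0.le _), norm_of_nonneg (rpow_nonneg (by linarith) _)]
  calc t ^ (-r) = 2 ^ r * (2 * t) ^ (-r) := by
        rw [mul_rpow zero_le_two ht0.le, ← mul_assoc, ← rpow_add two_pos]; simp
    _ ≤ 2 ^ r * (1 + t) ^ (-r) := by
        gcongr 2 ^ r * ?_
        exact rpow_le_rpow_of_nonpos (by linarith) (by linarith) (neg_nonpos.2 hr)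

theorem integrable_of_isBigO_norm_rpow {E : Type*} [NormedAddCommGroup E] [NormedSpace ℝ E]
    [FiniteDimensional ℝ E] [MeasurableSpace E] [BorelSpace E] {μ : Measure E}
    [μ.IsAddHaarMeasure] {g : E → ℝ} (hg : Continuous g) {r : ℝ} (hr : finrank ℝ E < r)
    (hO : g =O[cocompact E] fun x => ‖x‖ ^ (-r)) : Integrable g μ :=
  hg.locallyIntegrable.integrable_of_isBigO_cocompact
    (hO.trans ((isBigO_rpow_neg_one_add ((Nat.cast_nonneg _).trans hr.le)).comp_tendsto
      tendsto_norm_cocompact_atTop))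
    ((integrable_one_add_norm hr).integrableAtFilter _)

theorem isBigO_rpow_mul {h : ℝ → ℝ} {s : ℝ} (hO : h =O[atTop] fun t => t ^ (-s)) (β : ℝ) :
    (fun t => t ^ β * h t) =O[atTop] fun t => t ^ (-(s - β)) :=
  ((isBigO_refl (fun t : ℝ => t ^ β) atTop).mul hO).congr' EventuallyEq.rfl <|
    (eventually_gt_atTop 0).mono fun t ht => by simp only [← rpow_add ht]; ring_nf

theorem integral_rpow_pos {X : Type*} [MeasurableSpace X] {μ : Measure X} {f : X → ℝ} {q : ℝ}
    (hf0 : 0 ≤ f) (hf : 0 < ∫ x, f x ∂μ) (hfq : Integrable (fun x => f x ^ q) μ) (hq : q ≠ 0) :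
    0 < ∫ x, f x ^ q ∂μ := by
  rw [integral_pos_iff_support_of_nonneg hf0 (.of_integral_ne_zero hf.ne')] at hf
  rw [integral_pos_iff_support_of_nonneg (fun x => rpow_nonneg (hf0 x) q) hfq]
  convert hf using 2
  ext x
  simp only [Function.mem_support, ne_eq, rpow_eq_zero (hf0 x) hq]

theorem integral_le_integral_of_supporting_line {X : Type*} [MeasurableSpace X] {μ : Measure X}
    {Φ : ℝ → ℝ} {f g ℓ : X → ℝ} (hΦf : Integrable (fun x => Φ (f x)) μ)
    (hΦg : Integrable (fun x => Φ (g x)) μ) (hℓf : Integrable (fun x => ℓ x * f x) μ)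
    (hℓg : Integrable (fun x => ℓ x * g x) μ) (hℓ : ∫ x, ℓ x * g x ∂μ ≤ ∫ x, ℓ x * f x ∂μ)
    (hsupp : ∀ x, Φ (g x) + ℓ x * (f x - g x) ≤ Φ (f x)) :
    ∫ x, Φ (g x) ∂μ ≤ ∫ x, Φ (f x) ∂μ := by
  have hℓfg : Integrable (fun x => ℓ x * (f x - g x)) μ :=
    (hℓf.sub hℓg).congr (.of_forall fun x => (mul_sub _ _ _).symm)
  calc ∫ x, Φ (g x) ∂μ ≤ ∫ x, Φ (g x) ∂μ + ∫ x, ℓ x * (f x - g x) ∂μ := by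
        simp only [mul_sub]
        rw [integral_sub hℓf hℓg]
        linarith
    _ = ∫ x, Φ (g x) + ℓ x * (f x - g x) ∂μ := (integral_add hΦg hℓfg).symm
    _ ≤ ∫ x, Φ (f x) ∂μ := integral_mono (hΦg.add hℓfg) hΦf hsupp

theorem mul_log_tangent_le {a b : ℝ} (ha : 0 ≤ a) (hb : 0 < b) :
    b * log b + (log b + 1) * (a - b) ≤ a * log a := by
  rcases ha.eq_or_lt with rfl | ha
  · linarith [show b * log b + (log b + 1) * (0 - b) = -b by ring]
  · have h := mul_le_mul_of_nonneg_left (log_le_sub_one_of_pos (div_pos hb ha)) ha.le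
    rw [log_div hb.ne' ha.ne', mul_sub, mul_sub, mul_div_cancel₀ _ ha.ne'] at h
    linarith

theorem sub_one_mul_rpow_tangent_le {a b q : ℝ} (hq : 0 ≤ q) (ha : 0 ≤ a) (hb : 0 ≤ b)
    (hbq : 0 < b ∨ 1 < q) :
    (q - 1) * (q * b ^ (q - 1) * a + (1 - q) * b ^ q) ≤ (q - 1) * a ^ q := by
  rcases hb.eq_or_lt with rfl | hb
  · have hq1 : 1 < q := hbq.resolve_left (lt_irrefl 0)
    rw [zero_rpow (by linarith), zero_rpow (by linarith)]
    simpa using mul_nonneg (sub_nonneg.2 hq1.le) (rpow_nonneg ha q)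
  -- Bernoulli's inequality for `(a / b) ^ q`, scaled by `b ^ q`
  have hx : -1 ≤ a / b - 1 := by linarith [div_nonneg ha hb.le]
  have hbern : (q - 1) * (1 + q * (a / b - 1)) ≤ (q - 1) * (a / b) ^ q := by
    rcases le_total 1 q with hq1 | hq1
    · simpa using mul_le_mul_of_nonneg_left (one_add_mul_self_le_rpow_one_add hx hq1)
        (sub_nonneg.2 hq1)
    · simpa using mul_le_mul_of_nonpos_left (rpow_one_add_le_one_add_mul_self hx hq hq1)
        (sub_nonpos.2 hq1)
  have hbq : 0 < b ^ q := rpow_pos_of_pos hb q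
  calc (q - 1) * (q * b ^ (q - 1) * a + (1 - q) * b ^ q)
      = b ^ q * ((q - 1) * (1 + q * (a / b - 1))) := by
        rw [rpow_sub_one hb.ne']; field_simp; ring
    _ ≤ b ^ q * ((q - 1) * (a / b) ^ q) := by gcongr
    _ = (q - 1) * a ^ q := by
        rw [div_rpow ha hb.le]; field_simp

theorem sub_one_mul_rpow_supporting_le {a b s q : ℝ} (hq : 0 < q) (ha : 0 ≤ a) (hb : 0 ≤ b)
    (hbq : 0 < b ∨ 1 < q) (hs : (q - 1) * s ≤ (q - 1) * b ^ (q - 1)) (hsb : s * b = b ^ q) :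
    (q - 1) * b ^ q + q * (q - 1) * s * (a - b) ≤ (q - 1) * a ^ q :=
  calc (q - 1) * b ^ q + q * (q - 1) * s * (a - b)
      = q * a * ((q - 1) * s) + (q - 1) * b ^ q - q * (q - 1) * (s * b) := by ring
    _ ≤ q * a * ((q - 1) * b ^ (q - 1)) + (q - 1) * b ^ q - q * (q - 1) * b ^ q := by
        rw [hsb]; gcongr
    _ = (q - 1) * (q * b ^ (q - 1) * a + (1 - q) * b ^ q) := by ring
    _ ≤ (q - 1) * a ^ q := sub_one_mul_rpow_tangent_le hq.le ha hb hbq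

structure IsDensityWithMoment (n : ℕ) (α m : ℝ) (f : EuclideanSpace ℝ (Fin n) → ℝ) : Prop where
  nonneg : ∀ x, 0 ≤ f x
  integrable : Integrable f
  integral_eq_one : ∫ x, f x = 1
  integrable_moment : Integrable fun x => ‖x‖ ^ α * f x
  ellMoment_eq : ellMoment n α f = m

namespace IsDensityWithMoment

variable {n : ℕ} {α m : ℝ} {f g : EuclideanSpace ℝ (Fin n) → ℝ}

theorem integrable_affine_mul (hf : IsDensityWithMoment n α m f) (a b : ℝ) :
    Integrable fun x => (a + b * ‖x‖ ^ α) * f x :=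
  ((hf.integrable.const_mul a).add (hf.integrable_moment.const_mul b)).congr
    (.of_forall fun x => by simp only [Pi.add_apply]; ring)

theorem integral_affine_mul (hf : IsDensityWithMoment n α m f) (a b : ℝ) :
    ∫ x, (a + b * ‖x‖ ^ α) * f x = a + b * m := by
  simp only [add_mul, mul_assoc]
  rw [integral_add (hf.integrable.const_mul a) (hf.integrable_moment.const_mul b),
    integral_const_mul, integral_const_mul, hf.integral_eq_one, ← ellMoment, hf.ellMoment_eq,
    mul_one]

theorem integral_comp_le_of_supporting (hf : IsDensityWithMoment n α m f)
    (hg : IsDensityWithMoment n α m g) {Φ : ℝ → ℝ} (a b : ℝ)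
    (hΦf : Integrable fun x => Φ (f x)) (hΦg : Integrable fun x => Φ (g x))
    (hsupp : ∀ x, Φ (g x) + (a + b * ‖x‖ ^ α) * (f x - g x) ≤ Φ (f x)) :
    ∫ x, Φ (g x) ≤ ∫ x, Φ (f x) :=
  integral_le_integral_of_supporting_line hΦf hΦg (hf.integrable_affine_mul a b)
    (hg.integrable_affine_mul a b) (by rw [hf.integral_affine_mul, hg.integral_affine_mul]) hsupp

end IsDensityWithMoment

/-- The radial profile of the kernel: `qGaussKernel n α q γ x` unfolds to
`qGaussProfile α q γ ‖x‖`. -/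
def qGaussProfile (α q γ t : ℝ) : ℝ :=
  if q = 1 then Real.exp (-(γ * t ^ α))
  else (max (1 - (q - 1) * γ * t ^ α) 0) ^ ((1 : ℝ) / (q - 1))

section Kernel

variable {n : ℕ} {α q γ : ℝ}

theorem isBigO_qGaussProfile_of_lt_one (hγ : 0 < γ) (hq : q < 1) :
    qGaussProfile α q γ =O[atTop] fun t => t ^ (-(α / (1 - q))) := by
  have hc : 0 < (1 - q) * γ := mul_pos (sub_pos.2 hq) hγ
  refine IsBigO.of_bound (((1 - q) * γ) ^ (-(1 / (1 - q))))
    ((eventually_gt_atTop 0).mono fun t ht => ?_)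
  have htα : 0 < t ^ α := rpow_pos_of_pos ht α
  have hbase : max (1 - (q - 1) * γ * t ^ α) 0 = 1 + (1 - q) * γ * t ^ α := by
    rw [max_eq_left (by nlinarith)]; ring
  rw [qGaussProfile, if_neg hq.ne, hbase, norm_of_nonneg (rpow_nonneg (by positivity) _),
    norm_of_nonneg (rpow_nonneg ht.le _)]
  calc (1 + (1 - q) * γ * t ^ α) ^ ((1 : ℝ) / (q - 1))
      = (1 + (1 - q) * γ * t ^ α) ^ (-(1 / (1 - q))) := by
        rw [show q - 1 = -(1 - q) by ring, div_neg]
    _ ≤ ((1 - q) * γ * t ^ α) ^ (-(1 / (1 - q))) :=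
        rpow_le_rpow_of_nonpos (by positivity) (by linarith)
          (neg_nonpos.2 (one_div_pos.2 (sub_pos.2 hq)).le)
    _ = ((1 - q) * γ) ^ (-(1 / (1 - q))) * t ^ (-(α / (1 - q))) := by
        rw [mul_rpow hc.le htα.le, ← rpow_mul ht.le]
        ring_nf

theorem isBigO_qGaussProfile_one (hα : 0 < α) (hγ : 0 < γ) (s : ℝ) :
    qGaussProfile α 1 γ =O[atTop] fun t => t ^ (-s) :=
  ((isLittleO_exp_neg_mul_rpow_atTop hγ (-s / α)).comp_tendsto (tendsto_rpow_atTop hα)).isBigO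
    |>.congr' (.of_forall fun t => by simp [qGaussProfile, neg_mul])
      ((eventually_ge_atTop 0).mono fun t ht => by
        simp only [Function.comp, ← rpow_mul ht]
        congr 1
        field_simp)

theorem qGaussProfile_eventuallyEq_zero (hα : 0 < α) (hγ : 0 < γ) (hq : 1 < q) :
    qGaussProfile α q γ =ᶠ[atTop] 0 := by
  have hc : 0 < (q - 1) * γ := mul_pos (sub_pos.2 hq) hγ
  filter_upwards [(tendsto_rpow_atTop hα).eventually_gt_atTop ((q - 1) * γ)⁻¹] with t ht
  have h := mul_lt_mul_of_pos_left ht hc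
  rw [mul_inv_cancel₀ hc.ne'] at h
  rw [qGaussProfile, if_neg hq.ne', max_eq_right (by linarith), Pi.zero_apply,
    zero_rpow (one_div_ne_zero (sub_pos.2 hq).ne')]

theorem qGaussKernel_nonneg (x : EuclideanSpace ℝ (Fin n)) : 0 ≤ qGaussKernel n α q γ x := by
  unfold qGaussKernel
  split_ifs
  · exact (exp_pos _).le
  · exact rpow_nonneg (le_max_right _ _) _

theorem qGaussKernel_zero (hα : α ≠ 0) : qGaussKernel n α q γ 0 = 1 := by
  simp [qGaussKernel, zero_rpow hα]

theorem one_le_one_sub_mul_rpow (hq : q ≤ 1) (hγ : 0 ≤ γ) (x : EuclideanSpace ℝ (Fin n)) :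
    1 ≤ 1 - (q - 1) * γ * ‖x‖ ^ α := by
  have : 0 ≤ (1 - q) * γ * ‖x‖ ^ α := by
    have := sub_nonneg.2 hq
    positivity
  linarith

theorem qGaussKernel_pos (hq : q ≤ 1) (hγ : 0 ≤ γ) (x : EuclideanSpace ℝ (Fin n)) :
    0 < qGaussKernel n α q γ x := by
  unfold qGaussKernel
  split_ifs
  · exact exp_pos _
  · exact rpow_pos_of_pos
      (lt_max_of_lt_left (one_pos.trans_le (one_le_one_sub_mul_rpow hq hγ x))) _

theorem continuous_qGaussKernel (hα : 0 ≤ α) (hγ : 0 ≤ γ) :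
    Continuous (qGaussKernel n α q γ) := by
  have hpow : Continuous fun x : EuclideanSpace ℝ (Fin n) => ‖x‖ ^ α :=
    continuous_norm.rpow_const fun _ => Or.inr hα
  unfold qGaussKernel
  split_ifs with hq1
  · exact ((hpow.const_mul γ).neg).rexp
  refine ((continuous_const.sub (continuous_const.mul hpow)).max continuous_const).rpow_const
    fun x => ?_
  rcases lt_or_gt_of_ne hq1 with hq | hq
  · exact Or.inl (lt_max_of_lt_left (one_pos.trans_le (one_le_one_sub_mul_rpow hq.le hγ x))).ne'
  · exact Or.inr (one_div_pos.2 (sub_pos.2 hq)).le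

theorem integrable_norm_rpow_mul_qGaussKernel (hα : 0 < α) (hγ : 0 < γ) {β : ℝ} (hβ : 0 ≤ β)
    (hβq : q < 1 → β + n < α / (1 - q)) :
    Integrable fun x : EuclideanSpace ℝ (Fin n) => ‖x‖ ^ β * qGaussKernel n α q γ x := by
  obtain ⟨s, hs, hO⟩ : ∃ s, β + n < s ∧ qGaussProfile α q γ =O[atTop] fun t => t ^ (-s) := by
    rcases lt_trichotomy q 1 with hq | rfl | hq
    · exact ⟨_, hβq hq, isBigO_qGaussProfile_of_lt_one hγ hq⟩
    · exact ⟨β + n + 1, by linarith, isBigO_qGaussProfile_one hα hγ _⟩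
    · exact ⟨β + n + 1, by linarith,
        (qGaussProfile_eventuallyEq_zero hα hγ hq).trans_isBigO (isBigO_zero _ _)⟩
  exact integrable_of_isBigO_norm_rpow
    ((continuous_norm.rpow_const fun _ => Or.inr hβ).mul (continuous_qGaussKernel hα.le hγ.le))
    (r := s - β) (by rw [finrank_euclideanSpace_fin]; linarith)
    ((isBigO_rpow_mul hO β).comp_tendsto tendsto_norm_cocompact_atTop)

end Kernel

section Gaussian

variable {n : ℕ} {α q γ : ℝ}

theorem add_lt_div_one_sub_of_lt (hα : 0 < α) (hq : (n : ℝ) / (n + α) < q) (hq1 : q < 1) :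
    α + n < α / (1 - q) := by
  rw [lt_div_iff₀ (sub_pos.2 hq1)]
  rw [div_lt_iff₀ (by positivity)] at hq
  linarith

theorem integrable_qGaussKernel (hα : 0 < α) (hγ : 0 < γ) (hq : (n : ℝ) / (n + α) < q) :
    Integrable (qGaussKernel n α q γ) := by
  simpa using integrable_norm_rpow_mul_qGaussKernel hα hγ le_rfl
    fun h => by linarith [add_lt_div_one_sub_of_lt hα hq h]

theorem Zpart_pos (hα : 0 < α) (hγ : 0 < γ) (hq : (n : ℝ) / (n + α) < q) :
    0 < Zpart n α q γ :=
  integral_pos_of_integrable_nonneg_nonzero (x := 0) (continuous_qGaussKernel hα.le hγ.le)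
    (integrable_qGaussKernel hα hγ hq) qGaussKernel_nonneg
    (by rw [qGaussKernel_zero hα.ne']; exact one_ne_zero)

theorem qGaussian_pos (hq : q ≤ 1) (hγ : 0 ≤ γ) (hZ : 0 < Zpart n α q γ)
    (x : EuclideanSpace ℝ (Fin n)) : 0 < qGaussian n α q γ x :=
  div_pos (qGaussKernel_pos hq hγ x) hZ

theorem qGaussian_isDensityWithMoment {m : ℝ} (hα : 0 < α) (hγ : 0 < γ)
    (hq : (n : ℝ) / (n + α) < q) (hm : ellMoment n α (qGaussian n α q γ) = m) :
    IsDensityWithMoment n α m (qGaussian n α q γ) := by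
  have hZ := Zpart_pos hα hγ hq
  refine ⟨fun x => div_nonneg (qGaussKernel_nonneg x) hZ.le,
    (integrable_qGaussKernel hα hγ hq).div_const _, ?_, ?_, hm⟩
  · simp only [qGaussian]
    rw [integral_div, ← Zpart, div_self hZ.ne']
  · simpa only [qGaussian, mul_div_assoc] using
      (integrable_norm_rpow_mul_qGaussKernel hα hγ hα.le
        (add_lt_div_one_sub_of_lt hα hq)).div_const (Zpart n α q γ)

end Gaussian

section Shannon

variable {n : ℕ} {α γ m : ℝ}

theorem log_qGaussian_one (hZ : 0 < Zpart n α 1 γ) (x : EuclideanSpace ℝ (Fin n)) :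
    log (qGaussian n α 1 γ x) = -log (Zpart n α 1 γ) - γ * ‖x‖ ^ α := by
  rw [qGaussian, qGaussKernel, if_pos rfl, log_div (exp_ne_zero _) hZ.ne', log_exp]
  ring

theorem integral_mul_log_qGaussian_le {f : EuclideanSpace ℝ (Fin n) → ℝ}
    (hγ : 0 ≤ γ) (hZ : 0 < Zpart n α 1 γ) (hG : IsDensityWithMoment n α m (qGaussian n α 1 γ))
    (hf : IsDensityWithMoment n α m f) (hflog : Integrable fun x => f x * log (f x)) :
    ∫ x, qGaussian n α 1 γ x * log (qGaussian n α 1 γ x) ≤ ∫ x, f x * log (f x) := by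
  set Z := Zpart n α 1 γ
  refine hf.integral_comp_le_of_supporting hG (Φ := fun a => a * log a) (1 - log Z) (-γ) hflog
    ((hG.integrable_affine_mul (-log Z) (-γ)).congr
      (.of_forall fun x => by simp only [log_qGaussian_one hZ]; ring)) fun x => ?_
  have h := mul_log_tangent_le (hf.nonneg x) (qGaussian_pos le_rfl hγ hZ x)
  rw [log_qGaussian_one hZ] at h ⊢
  linarith

end Shannon

section Renyi

variable {n : ℕ} {α q γ m : ℝ}

theorem qGaussKernel_rpow_sub_one (hq1 : q ≠ 1) (x : EuclideanSpace ℝ (Fin n)) :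
    qGaussKernel n α q γ x ^ (q - 1) = max (1 - (q - 1) * γ * ‖x‖ ^ α) 0 := by
  rw [qGaussKernel, if_neg hq1, ← rpow_mul (le_max_right _ _), one_div,
    inv_mul_cancel₀ (sub_ne_zero.2 hq1), rpow_one]

theorem qGaussKernel_rpow (hq0 : q ≠ 0) (hq1 : q ≠ 1) (x : EuclideanSpace ℝ (Fin n)) :
    qGaussKernel n α q γ x ^ q = (1 - (q - 1) * γ * ‖x‖ ^ α) * qGaussKernel n α q γ x := by
  rw [qGaussKernel, if_neg hq1]
  rcases le_or_gt (1 - (q - 1) * γ * ‖x‖ ^ α) 0 with hw | hw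
  · rw [max_eq_right hw, zero_rpow (one_div_ne_zero (sub_ne_zero.2 hq1)), zero_rpow hq0,
      mul_zero]
  · rw [max_eq_left hw.le, ← rpow_mul hw.le,
      show 1 / (q - 1) * q = 1 + 1 / (q - 1) by field_simp; ring, rpow_add hw, rpow_one]

theorem qGaussian_rpow (hq0 : q ≠ 0) (hq1 : q ≠ 1) (hZ : 0 < Zpart n α q γ)
    (x : EuclideanSpace ℝ (Fin n)) :
    qGaussian n α q γ x ^ q
      = Zpart n α q γ ^ (1 - q) * (1 - (q - 1) * γ * ‖x‖ ^ α) * qGaussian n α q γ x := by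
  rw [qGaussian, div_rpow (qGaussKernel_nonneg x) hZ.le, qGaussKernel_rpow hq0 hq1,
    rpow_sub hZ, rpow_one]
  field_simp

theorem integrable_qGaussian_rpow (hq0 : q ≠ 0) (hq1 : q ≠ 1) (hZ : 0 < Zpart n α q γ)
    (hG : IsDensityWithMoment n α m (qGaussian n α q γ)) :
    Integrable fun x => qGaussian n α q γ x ^ q :=
  (hG.integrable_affine_mul (Zpart n α q γ ^ (1 - q))
    (-(Zpart n α q γ ^ (1 - q) * ((q - 1) * γ)))).congr
    (.of_forall fun x => by simp only [qGaussian_rpow hq0 hq1 hZ]; ring)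

theorem qGaussian_supporting_le (hq0 : 0 < q) (hq1 : q ≠ 1) (hγ : 0 ≤ γ)
    (hZ : 0 < Zpart n α q γ) (x : EuclideanSpace ℝ (Fin n)) {a : ℝ} (ha : 0 ≤ a) :
    (q - 1) * qGaussian n α q γ x ^ q
      + q * (q - 1) * (Zpart n α q γ ^ (1 - q) * (1 - (q - 1) * γ * ‖x‖ ^ α))
        * (a - qGaussian n α q γ x) ≤ (q - 1) * a ^ q := by
  set w := 1 - (q - 1) * γ * ‖x‖ ^ α
  have hw : (q - 1) * w ≤ (q - 1) * max w 0 := by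
    rcases le_total 1 q with hq | hq
    · exact mul_le_mul_of_nonneg_left (le_max_left _ _) (sub_nonneg.2 hq)
    · rw [max_eq_left (zero_le_one.trans (one_le_one_sub_mul_rpow hq hγ x))]
  have hGq1 : qGaussian n α q γ x ^ (q - 1) = Zpart n α q γ ^ (1 - q) * max w 0 := by
    rw [qGaussian, div_rpow (qGaussKernel_nonneg x) hZ.le, qGaussKernel_rpow_sub_one hq1,
      show 1 - q = -(q - 1) by ring, rpow_neg hZ.le]
    ring
  refine sub_one_mul_rpow_supporting_le hq0 ha (div_nonneg (qGaussKernel_nonneg x) hZ.le) ?_ ?_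
    (qGaussian_rpow hq0.ne' hq1 hZ x).symm
  · rcases lt_or_gt_of_ne hq1 with hq | hq
    · exact Or.inl (qGaussian_pos hq.le hγ hZ x)
    · exact Or.inr hq
  · rw [hGq1]
    linear_combination Zpart n α q γ ^ (1 - q) * hw

theorem sub_one_mul_igf_qGaussian_le {f : EuclideanSpace ℝ (Fin n) → ℝ} (hq0 : 0 < q)
    (hq1 : q ≠ 1) (hγ : 0 ≤ γ) (hZ : 0 < Zpart n α q γ)
    (hG : IsDensityWithMoment n α m (qGaussian n α q γ)) (hf : IsDensityWithMoment n α m f)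
    (hfq : Integrable fun x => f x ^ q) :
    (q - 1) * igf n q (qGaussian n α q γ) ≤ (q - 1) * igf n q f := by
  set Z := Zpart n α q γ
  have h := hf.integral_comp_le_of_supporting hG (Φ := fun a => (q - 1) * a ^ q)
    (q * (q - 1) * Z ^ (1 - q)) (-(q * (q - 1) * Z ^ (1 - q) * ((q - 1) * γ)))
    (hfq.const_mul _) ((integrable_qGaussian_rpow hq0.ne' hq1 hZ hG).const_mul _) fun x => by
      convert qGaussian_supporting_le hq0 hq1 hγ hZ x (hf.nonneg x) using 2
      ring
  simpa only [igf, integral_const_mul] using h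

theorem entPower_le_of_sub_one_mul_igf_le {f g : EuclideanSpace ℝ (Fin n) → ℝ} (hq1 : q ≠ 1)
    (h : (q - 1) * igf n q g ≤ (q - 1) * igf n q f) (hf : 0 ≤ igf n q f)
    (hg : 1 < q → 0 < igf n q g) : entPower n q f ≤ entPower n q g := by
  rw [entPower, entPower, if_neg hq1, if_neg hq1]
  rcases lt_or_gt_of_ne hq1 with hq | hq
  · exact rpow_le_rpow hf ((mul_le_mul_left_of_neg (sub_neg.2 hq)).1 h)
      (one_div_pos.2 (sub_pos.2 hq)).le
  · exact rpow_le_rpow_of_nonpos (hg hq) (le_of_mul_le_mul_left h (sub_pos.2 hq))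
      (one_div_nonpos.2 (sub_nonpos.2 hq.le))

end Renyi

theorem max_entropy_qGaussian_general
    (n : ℕ) (α q m γ : ℝ) (hα : 0 < α)
    (hq : (n : ℝ) / ((n : ℝ) + α) < q) (hγ : 0 < γ)
    (hGmom : ellMoment n α (qGaussian n α q γ) = m)
    (f : EuclideanSpace ℝ (Fin n) → ℝ)
    (hnonneg : ∀ x, 0 ≤ f x)
    (hnorm : ∫ x : EuclideanSpace ℝ (Fin n), f x = 1)
    (hmfin : Integrable (fun x : EuclideanSpace ℝ (Fin n) => ‖x‖ ^ α * f x))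
    (hmom : ellMoment n α f = m)
    (hMfin : q ≠ 1 → Integrable (fun x : EuclideanSpace ℝ (Fin n) => f x ^ q))
    (hlogfin : q = 1 → Integrable (fun x : EuclideanSpace ℝ (Fin n) => f x * Real.log (f x))) :
    entPower n q f ≤ entPower n q (qGaussian n α q γ) := by
  have hq0 : 0 < q := (div_nonneg n.cast_nonneg (by positivity)).trans_lt hq
  have hZ := Zpart_pos hα hγ hq
  have hG := qGaussian_isDensityWithMoment hα hγ hq hGmom
  have hf : IsDensityWithMoment n α m f :=
    ⟨hnonneg, .of_integral_ne_zero (by simp [hnorm]), hnorm, hmfin, hmom⟩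
  by_cases hq1 : q = 1
  · subst hq1
    rw [entPower, entPower, if_pos rfl, if_pos rfl]
    exact exp_le_exp.2 (neg_le_neg (integral_mul_log_qGaussian_le hγ.le hZ hG hf (hlogfin rfl)))
  · refine entPower_le_of_sub_one_mul_igf_le hq1
      (sub_one_mul_igf_qGaussian_le hq0 hq1 hγ.le hZ hG hf (hMfin hq1))
      (integral_nonneg fun x => rpow_nonneg (hnonneg x) q) fun _ => ?_
    exact integral_rpow_pos hG.nonneg (by rw [hG.integral_eq_one]; exact one_pos)
      (integrable_qGaussian_rpow hq0.ne' hq1 hZ hG) hq0.ne'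

/-- **Maximum entropy characterization of generalized `q`-Gaussians.**
Let `α ∈ (0,∞)` and `q > n/(n+α)`. Among all probability densities `f` on `ℝ^n` with
given elliptic moment `m_α[f] = m < ∞` and finite Rényi entropy power, one has
`N_q[f] ≤ N_q[G_γ]` where `γ > 0` is such that `m_α[G_γ] = m`. -/
theorem max_entropy_qGaussian
    (n : ℕ) (hn : 0 < n) (α q m γ : ℝ) (hα : 0 < α)
    (hq : (n : ℝ) / ((n : ℝ) + α) < q) (hγ : 0 < γ)
    (hGmom : ellMoment n α (qGaussian n α q γ) = m)
    (f : EuclideanSpace ℝ (Fin n) → ℝ)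
    (hnonneg : ∀ x, 0 ≤ f x)
    (hnorm : ∫ x : EuclideanSpace ℝ (Fin n), f x = 1)
    (hmfin : Integrable (fun x : EuclideanSpace ℝ (Fin n) => ‖x‖ ^ α * f x))
    (hmom : ellMoment n α f = m)
    (hMfin : q ≠ 1 → Integrable (fun x : EuclideanSpace ℝ (Fin n) => f x ^ q))
    (hlogfin : q = 1 → Integrable (fun x : EuclideanSpace ℝ (Fin n) => f x * Real.log (f x))) :
    entPower n q f ≤ entPower n q (qGaussian n α q γ) :=
  max_entropy_qGaussian_general n α q m γ hα hq hγ hGmom f hnonneg hnorm hmfin hmom hMfin hlogfin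
end
end

section
/- For α, β > 1 Hölder conjugates, γ > 0 and q in the range where the quantities are finite, the generalized (β,q)-Fisher information of the generalized q-Gaussian G_γ on ℝ^n equals I_{β,q}[G_γ] = (αγ)^β · μ_{α,1} / (μ_{0,1})^{β(q−1)+1}, where μ_{p,ν} = ∫_{ℝ^n} |x|^p (1 − (q−1)γ|x|^α)_+^{ν/(q−1)} dx for q ≠ 1 (and μ_{p,ν} = ∫ |x|^p exp(−νγ|x|^α) dx for q = 1). In particular Z(γ) = μ_{0,1}. -/
open MeasureTheory Real Filter
open scoped ENNReal Topology NNReal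

noncomputable section

/-- `μ_{p,ν} = ∫_{ℝ^n} |x|^p (1 - (q-1)γ|x|^α)_+^{ν/(q-1)} dx` for `q ≠ 1`
(and `∫ |x|^p exp(-νγ|x|^α) dx` for `q = 1`). -/
def muQ (n : ℕ) (α q γ p ν : ℝ) : ℝ :=
  if q = 1 then ∫ x : EuclideanSpace ℝ (Fin n), ‖x‖ ^ p * Real.exp (-(ν * γ * ‖x‖ ^ α))
  else ∫ x : EuclideanSpace ℝ (Fin n),
    ‖x‖ ^ p * (max (1 - (q - 1) * γ * ‖x‖ ^ α) 0) ^ (ν / (q - 1))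

/-!
Write `G = K / Z` and `u(x) = 1 - (q-1)γ‖x‖^α`. Where `u > 0`, `K^(q-1) = u` and
`‖∇K‖ / K = αγ‖x‖^(α-1) / u`, so in `G^(β(q-1)+1) (‖∇G‖/G)^β` the factor
`G^(β(q-1)) = u^β / Z^(β(q-1))` cancels `u^(-β)`, and `β(α-1) = α` turns the integrand into
`(αγ)^β ‖x‖^α K / Z^(β(q-1)+1)`. Where `u < 0` the kernel vanishes near `x`, and `u = 0` is a
null sphere.
-/

def qProfile (q γ s : ℝ) : ℝ :=
  if q = 1 then Real.exp (-(γ * s))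
  else (max (1 - (q - 1) * γ * s) 0) ^ ((1 : ℝ) / (q - 1))

theorem qGaussKernel_eq_qProfile (n : ℕ) (α q γ : ℝ) :
    qGaussKernel n α q γ = fun x => qProfile q γ (‖x‖ ^ α) := rfl

section qProfile

variable {q γ s : ℝ}

theorem qProfile_nonneg : 0 ≤ qProfile q γ s := by
  unfold qProfile
  split_ifs
  · exact (exp_pos _).le
  · exact rpow_nonneg (le_max_right _ _) _

theorem qProfile_le_one (hγ : 0 ≤ γ) (hs : 0 ≤ s) : qProfile q γ s ≤ 1 := by
  unfold qProfile
  split_ifs with hq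
  · exact exp_le_one_iff.mpr (by nlinarith)
  · rcases lt_or_gt_of_ne (sub_ne_zero.mpr hq) with hq' | hq'
    · have hbase : 1 ≤ 1 - (q - 1) * γ * s := by
        nlinarith [mul_nonpos_of_nonpos_of_nonneg hq'.le hγ]
      rw [max_eq_left (by linarith)]
      exact rpow_le_one_of_one_le_of_nonpos hbase (one_div_neg.mpr hq').le
    · refine rpow_le_one (le_max_right _ _) (max_le ?_ zero_le_one) (one_div_pos.mpr hq').le
      nlinarith [mul_nonneg hq'.le hγ]

theorem measurable_qProfile : Measurable (qProfile q γ) := by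
  unfold qProfile
  split_ifs <;> fun_prop

variable (hs : 0 < 1 - (q - 1) * γ * s)
include hs

theorem qProfile_pos : 0 < qProfile q γ s := by
  unfold qProfile
  split_ifs
  · exact exp_pos _
  · exact rpow_pos_of_pos (lt_max_of_lt_left hs) _

theorem qProfile_rpow_sub_one : qProfile q γ s ^ (q - 1) = 1 - (q - 1) * γ * s := by
  unfold qProfile
  split_ifs with hq
  · simp [hq]
  · rw [max_eq_left hs.le, ← rpow_mul hs.le, one_div_mul_cancel (sub_ne_zero.mpr hq), rpow_one]

theorem hasDerivAt_qProfile :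
    HasDerivAt (qProfile q γ) (-γ * qProfile q γ s / (1 - (q - 1) * γ * s)) s := by
  by_cases hq : q = 1
  · subst hq
    convert ((hasDerivAt_id s).const_mul γ).neg.exp using 1
    · ext t; simp [qProfile]
    · simp [qProfile]; ring
  · have hq0 : q - 1 ≠ 0 := sub_ne_zero.mpr hq
    have hu : HasDerivAt (fun t => 1 - (q - 1) * γ * t) (-((q - 1) * γ)) s := by
      simpa using ((hasDerivAt_id s).const_mul ((q - 1) * γ)).const_sub 1
    have hloc : (fun t => (1 - (q - 1) * γ * t) ^ ((1 : ℝ) / (q - 1))) =ᶠ[𝓝 s] qProfile q γ := by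
      filter_upwards [continuousAt_const.eventually_lt hu.continuousAt hs] with t ht
      simp [qProfile, hq, max_eq_left ht.le]
    refine ((hu.rpow_const (Or.inl hs.ne')).congr_of_eventuallyEq hloc.symm).congr_deriv ?_
    rw [hloc.eq_of_nhds.symm, rpow_sub_one hs.ne']
    field_simp

end qProfile

theorem qProfile_eventuallyEq_zero {q γ s : ℝ} (hs : 1 - (q - 1) * γ * s < 0) :
    qProfile q γ =ᶠ[𝓝 s] 0 := by
  have hq : q ≠ 1 := by rintro rfl; norm_num at hs
  have hu : Continuous fun t => 1 - (q - 1) * γ * t := by fun_prop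
  filter_upwards [hu.continuousAt.eventually_lt continuousAt_const hs] with t ht
  simp [qProfile, hq, max_eq_right ht.le, zero_rpow (inv_ne_zero (sub_ne_zero.mpr hq))]

theorem norm_fderiv_comp_norm_rpow {E : Type*} [NormedAddCommGroup E] [InnerProductSpace ℝ E]
    {φ : ℝ → ℝ} {φ' α : ℝ} (x : E) (hα : 1 < α) (hφ : HasDerivAt φ φ' (‖x‖ ^ α)) :
    ‖fderiv ℝ (fun y => φ (‖y‖ ^ α)) x‖ = |φ'| * (α * ‖x‖ ^ (α - 1)) := by
  have hcomp : HasFDerivAt (fun y => φ (‖y‖ ^ α)) (φ' • fderiv ℝ (fun y : E => ‖y‖ ^ α) x) x := by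
    rw [fderiv_norm_rpow x hα]
    exact hφ.comp_hasFDerivAt x (hasFDerivAt_norm_rpow x hα)
  rw [hcomp.fderiv, norm_smul, norm_eq_abs, norm_fderiv_norm_id_rpow x hα]

theorem ae_one_sub_mul_norm_rpow_ne_zero {E : Type*} [NormedAddCommGroup E] [NormedSpace ℝ E]
    [MeasurableSpace E] [BorelSpace E] [FiniteDimensional ℝ E] (μ : Measure E)
    [μ.IsAddHaarMeasure] {α : ℝ} (hα : α ≠ 0) (c : ℝ) :
    ∀ᵐ x ∂μ, 1 - c * ‖x‖ ^ α ≠ 0 := by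
  have hsub : {x : E | ¬ 1 - c * ‖x‖ ^ α ≠ 0} ⊆ Metric.sphere 0 (c⁻¹ ^ α⁻¹) \ {0} := by
    intro x hx
    have hx' : ‖x‖ ^ α = c⁻¹ := by
      have hc : c ≠ 0 := by rintro rfl; norm_num at hx
      simp only [Set.mem_ofPred_eq, not_not] at hx
      field_simp
      linarith
    refine ⟨by rw [mem_sphere_zero_iff_norm, ← hx', rpow_rpow_inv (norm_nonneg _) hα], ?_⟩
    rintro rfl
    simp [zero_rpow hα] at hx
  refine ae_iff.mpr (measure_mono_null hsub ?_)
  rcases eq_or_ne (c⁻¹ ^ α⁻¹) 0 with hr | hr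
  · simp [hr]
  · exact measure_mono_null Set.sdiff_subset (Measure.addHaar_sphere_of_ne_zero μ 0 hr)

theorem integrable_of_integrable_norm_rpow_mul {E : Type*} [NormedAddCommGroup E]
    [MeasurableSpace E] [BorelSpace E] [ProperSpace E] {μ : Measure E}
    [IsFiniteMeasureOnCompacts μ] {f : E → ℝ} {p C : ℝ} (hp : 0 ≤ p)
    (hf : AEStronglyMeasurable f μ) (hfC : ∀ x, |f x| ≤ C)
    (h : Integrable (fun x => ‖x‖ ^ p * f x) μ) : Integrable f μ := by
  have hball : Integrable ((Metric.closedBall (0 : E) 1).indicator fun _ => C) μ :=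
    (integrableOn_const (isCompact_closedBall 0 1).measure_lt_top.ne).integrable_indicator
      measurableSet_closedBall
  refine (hball.add h.norm).mono' hf (Eventually.of_forall fun x => ?_)
  have hfx : 0 ≤ ‖‖x‖ ^ p * f x‖ := norm_nonneg _
  by_cases hx : ‖x‖ ≤ 1
  · simp only [Pi.add_apply, Set.indicator_of_mem (mem_closedBall_zero_iff.mpr hx)]
    linarith [hfC x, norm_eq_abs (f x)]
  · rw [Pi.add_apply, Set.indicator_of_notMem (by simpa using hx), zero_add, norm_mul,
      norm_of_nonneg (rpow_nonneg (norm_nonneg x) p)]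
    exact le_mul_of_one_le_left (norm_nonneg _) (one_le_rpow (by linarith) hp)

theorem muQ_one (n : ℕ) (α q γ p : ℝ) :
    muQ n α q γ p 1 = ∫ x, ‖x‖ ^ p * qGaussKernel n α q γ x := by
  unfold muQ qGaussKernel
  split_ifs <;> simp

theorem zpart_eq_muQ (n : ℕ) (α q γ : ℝ) : Zpart n α q γ = muQ n α q γ 0 1 := by
  simp [muQ_one, Zpart]

section qGaussian

variable {n : ℕ} {α q γ : ℝ}

theorem zpart_pos_of_integrable (hα : 0 < α)
    (h : Integrable (qGaussKernel n α q γ)) : 0 < Zpart n α q γ := by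
  have hsupp : {x : EuclideanSpace ℝ (Fin n) | 0 < 1 - (q - 1) * γ * ‖x‖ ^ α} ⊆
      Function.support (qGaussKernel n α q γ) := fun x hx => (qProfile_pos hx).ne'
  have hopen : IsOpen {x : EuclideanSpace ℝ (Fin n) | 0 < 1 - (q - 1) * γ * ‖x‖ ^ α} :=
    isOpen_lt continuous_const <| continuous_const.sub <|
      (continuous_norm.rpow_const fun _ => Or.inr hα.le).const_mul _
  refine (integral_pos_iff_support_of_nonneg (fun _ => qProfile_nonneg) h).mpr ?_
  refine (hopen.measure_pos volume ⟨0, ?_⟩).trans_le (measure_mono hsupp)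
  simp [zero_rpow hα.ne']

theorem muQ_eq_zero_of_zpart_eq_zero (hα : 0 < α) (hγ : 0 ≤ γ) (hZ : Zpart n α q γ = 0) :
    muQ n α q γ α 1 = 0 := by
  rw [muQ_one]
  refine integral_undef fun h => (zpart_pos_of_integrable hα ?_).ne' hZ
  refine integrable_of_integrable_norm_rpow_mul hα.le ?_ (C := 1) (fun x => ?_) h
  · exact (measurable_qProfile.comp (by fun_prop)).aestronglyMeasurable
  · rw [qGaussKernel_eq_qProfile, abs_of_nonneg qProfile_nonneg]
    exact qProfile_le_one hγ (rpow_nonneg (norm_nonneg x) α)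

end qGaussian

theorem genFisher_zero (n : ℕ) {β : ℝ} (hβ : β ≠ 0) (q : ℝ) : genFisher n β q 0 = 0 := by
  simp [genFisher, zero_rpow hβ]

theorem genFisher_div_const {n : ℕ} {β q Z : ℝ} {f : EuclideanSpace ℝ (Fin n) → ℝ}
    (hf : ∀ x, 0 ≤ f x) (hZ : 0 < Z) :
    genFisher n β q (fun x => f x / Z) = genFisher n β q f / Z ^ (β * (q - 1) + 1) := by
  have hfZ : (fun x => f x / Z) = Z⁻¹ • f := by ext x; simp [div_eq_inv_mul]
  rw [genFisher, genFisher, ← integral_div, hfZ, fderiv_const_smul_field]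
  congr 1 with x
  have hratio : ‖(Z⁻¹ • fderiv ℝ f) x‖ / (f x / Z) = ‖fderiv ℝ f x‖ / f x := by
    rw [Pi.smul_apply, norm_smul, norm_inv, norm_of_nonneg hZ.le, div_eq_inv_mul (f x),
      mul_div_mul_left _ _ (inv_ne_zero hZ.ne')]
  rw [hratio, div_rpow (hf x) hZ.le, div_mul_eq_mul_div]

theorem fisherIntegrand_qGaussKernel {n : ℕ} {α β q γ : ℝ} (hα : 1 < α) (hβ : β ≠ 0)
    (hαβ : β * (α - 1) = α) (hγ : 0 < γ) {x : EuclideanSpace ℝ (Fin n)}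
    (hx : 1 - (q - 1) * γ * ‖x‖ ^ α ≠ 0) :
    qGaussKernel n α q γ x ^ (β * (q - 1) + 1) *
        (‖fderiv ℝ (qGaussKernel n α q γ) x‖ / qGaussKernel n α q γ x) ^ β
      = (α * γ) ^ β * (‖x‖ ^ α * qGaussKernel n α q γ x) := by
  simp only [qGaussKernel_eq_qProfile]
  rcases hx.lt_or_gt with hneg | hpos
  · have hzero : (fun y : EuclideanSpace ℝ (Fin n) => qProfile q γ (‖y‖ ^ α)) =ᶠ[𝓝 x] 0 :=
      (qProfile_eventuallyEq_zero hneg).comp_tendsto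
        ((continuous_norm.rpow_const fun _ => Or.inr (by linarith)).tendsto x)
    simp [hzero.fderiv_eq, hzero.eq_of_nhds, zero_rpow hβ]
  · have hk : 0 < qProfile q γ (‖x‖ ^ α) := qProfile_pos hpos
    rw [norm_fderiv_comp_norm_rpow x hα (hasDerivAt_qProfile hpos)]
    have hslope : |-γ * qProfile q γ (‖x‖ ^ α) / (1 - (q - 1) * γ * ‖x‖ ^ α)| *
        (α * ‖x‖ ^ (α - 1)) / qProfile q γ (‖x‖ ^ α)
        = α * γ * ‖x‖ ^ (α - 1) / (1 - (q - 1) * γ * ‖x‖ ^ α) := by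
      rw [abs_div, abs_mul, abs_neg, abs_of_pos hγ, abs_of_pos hk, abs_of_pos hpos]
      field_simp
    have hα0 : 0 < α := by linarith
    rw [hslope, div_rpow (by positivity) hpos.le, mul_rpow (by positivity) (by positivity),
      ← rpow_mul (norm_nonneg x), mul_comm (α - 1) β, hαβ, rpow_add hk, rpow_one,
      mul_comm β (q - 1), rpow_mul hk.le, qProfile_rpow_sub_one hpos]
    field_simp

theorem genFisher_qGaussKernel {n : ℕ} {α β q γ : ℝ} (hα : 1 < α) (hβ : β ≠ 0)
    (hαβ : β * (α - 1) = α) (hγ : 0 < γ) :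
    genFisher n β q (qGaussKernel n α q γ) = (α * γ) ^ β * muQ n α q γ α 1 := by
  rw [genFisher, muQ_one, ← integral_const_mul]
  refine integral_congr_ae ?_
  filter_upwards [ae_one_sub_mul_norm_rpow_ne_zero volume (by linarith : α ≠ 0) ((q - 1) * γ)]
    with x hx
  exact fisherIntegrand_qGaussKernel hα hβ hαβ hγ hx

theorem genFisher_qGaussian_general
    (n : ℕ) (α β γ q : ℝ) (hα : 1 < α) (hβ : 1 < β)
    (hconj : 1 / α + 1 / β = 1) (hγ : 0 < γ) :
    genFisher n β q (qGaussian n α q γ)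
      = (α * γ) ^ β * muQ n α q γ α 1 / (muQ n α q γ 0 1) ^ (β * (q - 1) + 1)
    ∧ Zpart n α q γ = muQ n α q γ 0 1 := by
  have hβ0 : β ≠ 0 := (zero_lt_one.trans hβ).ne'
  have hαβ : β * (α - 1) = α := by
    field_simp at hconj
    linarith
  refine ⟨?_, zpart_eq_muQ n α q γ⟩
  rw [← zpart_eq_muQ]
  have hZ0 : 0 ≤ Zpart n α q γ := integral_nonneg fun _ => qProfile_nonneg
  rcases hZ0.eq_or_lt with hZ | hZ
  · -- `Z = 0` only when the kernel is not integrable; then both sides are Lean's junk `0`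
    have hG : qGaussian n α q γ = 0 := by ext x; simp [qGaussian, ← hZ]
    rw [hG, genFisher_zero n hβ0, muQ_eq_zero_of_zpart_eq_zero (by linarith) hγ.le hZ.symm]
    simp
  · rw [show qGaussian n α q γ = fun x => qGaussKernel n α q γ x / Zpart n α q γ from rfl,
      genFisher_div_const (f := qGaussKernel n α q γ) (fun _ => qProfile_nonneg) hZ,
      genFisher_qGaussKernel hα hβ0 hαβ hγ]

/-- **The generalized `(β,q)`-Fisher information of the generalized `q`-Gaussian**:
for `α, β > 1` Hölder conjugates, `γ > 0` and `q` in the range where the involved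
quantities are finite,
`I_{β,q}[G_γ] = (αγ)^β μ_{α,1} / (μ_{0,1})^{β(q-1)+1}`; in particular `Z(γ) = μ_{0,1}`. -/
theorem genFisher_qGaussian
    (n : ℕ) (hn : 0 < n) (α β γ q : ℝ) (hα : 1 < α) (hβ : 1 < β)
    (hconj : 1 / α + 1 / β = 1) (hγ : 0 < γ)
    (hq : max (1 - α) ((n : ℝ) / ((n : ℝ) + α)) < q) :
    genFisher n β q (qGaussian n α q γ)
      = (α * γ) ^ β * muQ n α q γ α 1 / (muQ n α q γ 0 1) ^ (β * (q - 1) + 1)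
    ∧ Zpart n α q γ = muQ n α q γ 0 1 :=
  genFisher_qGaussian_general n α β γ q hα hβ hconj hγ
end
end
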